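/- If a graph G has a dominating vertex v and M(G−v) = Z(G−v), then M(G) = Z(G). -/

import Mathlib

/-- The set of real symmetric matrices whose off-diagonal zero/nonzero
pattern matches the edges of the graph `G`. -/
def SG {V : Type*} (G : SimpleGraph V) : Set (Matrix V V ℝ) :=
  {A | A.IsSymm ∧ ∀ i j : V, i ≠ j → (A i j ≠ 0 ↔ G.Adj i j)}

/-- Maximum nullity of a graph. -/
noncomputable def maxNullity {V : Type*} [Fintype V] (G : SimpleGraph V) : ℕ :=
  sSup {k | ∃ A ∈ SG G, Fintype.card V - A.rank = k}

/-- Vertices that eventually become blue starting from the blue set `B`,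
under the standard color change rule: a blue vertex with a unique white
neighbor colors that neighbor blue. -/
inductive ZFClosed {V : Type*} (G : SimpleGraph V) (B : Set V) : V → Prop
  | init {v : V} (h : v ∈ B) : ZFClosed G B v
  | force {u v : V} (hu : ZFClosed G B u) (hadj : G.Adj u v)
      (huniq : ∀ w, G.Adj u w → w ≠ v → ZFClosed G B w) : ZFClosed G B v

/-- `B` is a zero forcing set of `G`. -/
def IsZeroForcingSet {V : Type*} (G : SimpleGraph V) (B : Set V) : Prop :=
  ∀ v : V, ZFClosed G B v

/-- The zero forcing number of `G`: the minimum size of a zero forcing set. -/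
noncomputable def zfNum {V : Type*} [Fintype V] (G : SimpleGraph V) : ℕ :=
  sInf {k | ∃ B : Finset V, IsZeroForcingSet G ↑B ∧ B.card = k}

/-- The graph obtained from `G` by deleting the vertex `v`. -/
def deleteVert {V : Type*} (G : SimpleGraph V) (v : V) :
    SimpleGraph {x : V // x ≠ v} where
  Adj a b := G.Adj a.val b.val
  symm := ⟨fun _ _ h => G.adj_symm h⟩
  loopless := ⟨fun a h => G.irrefl (v := a.val) h⟩

noncomputable instance {V : Type*} [Finite V] (v : V) :
    Fintype {x : V // x ≠ v} := Fintype.ofFinite _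

/-!
Deleting the dominating vertex `v` shifts `M` and `Z` by the same amount `d`, in the sense that
`M(G - v) + d ≤ M(G)` and `Z(G) ≤ Z(G - v) + d`; with `M(G) ≤ Z(G)` this squeezes `M(G) = Z(G)`.
The shift depends on the isolated vertices of `G - v`:

* none (`d = 1`): an optimal `A' ∈ S(G - v)` has no zero row, so some `z` has `A' z` nowhere zero,
  and bordering `A'` with the row `A' z` gives a matrix of `S(G)` of rank at most that of `A'`;
  a zero forcing set of `G - v` together with `v` forces `G`;
* exactly one, `u` (`d = 0`): first make the diagonal entry of `A'` at `u` nonzero, at the cost of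
  at most one in rank; `u` lies in every zero forcing set of `G - v`, and can be replaced by `v`,
  which forces `u` at the end;
* at least two, `u₁ ≠ u₂` (`d = -1`): deleting a vertex raises the nullity by at most one; `u₂`
  can be dropped from a zero forcing set of `G - v`, since `u₁` forces `v`, which forces `u₂`.
-/

open Matrix Module

section LinearAlgebra

variable {K : Type*} [Field K] {m n : Type*} [Fintype n]

theorem Matrix.exists_forall_mulVec_ne_zero [Infinite K] [Finite m] (A : Matrix m n K)
    (h : ∀ i, ∃ j, A i j ≠ 0) : ∃ z, ∀ i, (A *ᵥ z) i ≠ 0 := by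
  classical
  by_contra! hcover
  obtain ⟨i, hi⟩ := Subspace.exists_eq_top_of_iUnion_eq_univ
    (p := fun i => LinearMap.ker ((LinearMap.proj i).comp A.mulVecLin))
    (Set.eq_univ_of_forall fun z => Set.mem_iUnion.mpr ((hcover z).imp fun _ hz => hz))
  obtain ⟨j, hj⟩ := h i
  have hsingle : Pi.single j 1 ∈ LinearMap.ker ((LinearMap.proj i).comp A.mulVecLin) :=
    hi ▸ Submodule.mem_top
  simp [hj] at hsingle

theorem Matrix.rank_le_rank_submatrix_ne_add_one [Finite m] (A : Matrix m n K) (u : m) :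
    A.rank ≤ (A.submatrix (Subtype.val : {i // i ≠ u} → m) id).rank + 1 := by
  set A' := A.submatrix (Subtype.val : {i // i ≠ u} → m) id
  have hrows : Set.range A.row ⊆ insert (A u) (Set.range A'.row) := by
    rintro _ ⟨i, rfl⟩
    by_cases hi : i = u
    · exact Or.inl (by rw [hi]; rfl)
    · exact Or.inr ⟨⟨i, hi⟩, rfl⟩
  have hu : finrank K (Submodule.span K {A u}) ≤ 1 := by
    simpa using finrank_span_le_card (R := K) ({A u} : Set (n → K))
  rw [rank_eq_finrank_span_row, rank_eq_finrank_span_row]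
  calc finrank K (Submodule.span K (Set.range A.row))
      ≤ finrank K ↥(Submodule.span K {A u} ⊔ Submodule.span K (Set.range A'.row)) := by
        rw [← Submodule.span_insert]
        exact Submodule.finrank_mono (Submodule.span_mono hrows)
    _ ≤ finrank K (Submodule.span K {A u}) + finrank K (Submodule.span K (Set.range A'.row)) :=
        Submodule.finrank_add_le_finrank_add_finrank _ _
    _ ≤ _ := by omega

theorem Matrix.rank_le_rank_add_one_of_forall_ne_row_eq [Finite m] (B A : Matrix m n K) (u : m)
    (h : ∀ i, i ≠ u → B i = A i) : B.rank ≤ A.rank + 1 :=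
  calc B.rank ≤ (B.submatrix (Subtype.val : {i // i ≠ u} → m) id).rank + 1 :=
        B.rank_le_rank_submatrix_ne_add_one u
    _ = (A.submatrix (Subtype.val : {i // i ≠ u} → m) id).rank + 1 := by
        congr 2; ext i j; simp [h i i.2]
    _ ≤ A.rank + 1 := by gcongr; exact rank_submatrix_le _ _ _

theorem Matrix.rank_le_rank_submatrix_ne_ne_add_two [Fintype m] (A : Matrix m m K) (u : m) :
    A.rank ≤ (A.submatrix (Subtype.val : {i // i ≠ u} → m) (Subtype.val : {i // i ≠ u} → m)).rank
      + 2 := by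
  set B := A.submatrix (Subtype.val : {i // i ≠ u} → m) id
  calc A.rank ≤ B.rank + 1 := A.rank_le_rank_submatrix_ne_add_one u
    _ = Bᵀ.rank + 1 := by rw [rank_transpose]
    _ ≤ (Bᵀ.submatrix (Subtype.val : {i // i ≠ u} → m) id).rank + 1 + 1 := by
        gcongr; exact Bᵀ.rank_le_rank_submatrix_ne_add_one u
    _ = (A.submatrix Subtype.val Subtype.val)ᵀ.rank + 2 := rfl
    _ = _ := by rw [rank_transpose]

end LinearAlgebra

theorem card_subtype_ne_add_one {V : Type*} [Fintype V] (v : V) :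
    Fintype.card {x // x ≠ v} + 1 = Fintype.card V := by
  classical
  rw [← Fintype.card_option]
  exact Fintype.card_congr (Equiv.optionSubtypeNe v)

theorem deleteVert_adj {V : Type*} {G : SimpleGraph V} {v : V} {a b : {x // x ≠ v}} :
    (deleteVert G v).Adj a b ↔ G.Adj a b := Iff.rfl

section PatternMatrices

variable {V : Type*} (G : SimpleGraph V)

theorem adjMatrix_mem_SG [DecidableRel G.Adj] : G.adjMatrix ℝ ∈ SG G :=
  ⟨G.isSymm_adjMatrix, fun i j _ => by by_cases h : G.Adj i j <;> simp [h]⟩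

theorem apply_ne_zero_of_mem_SG_of_adj {A : Matrix V V ℝ} (hA : A ∈ SG G) {i j : V}
    (hij : G.Adj i j) : A i j ≠ 0 :=
  (hA.2 i j hij.ne).mpr hij

theorem add_diagonal_mem_SG [DecidableEq V] {A : Matrix V V ℝ} (hA : A ∈ SG G) (d : V → ℝ) :
    A + diagonal d ∈ SG G := by
  refine ⟨hA.1.add (isSymm_diagonal d), fun i j hij => ?_⟩
  simpa [diagonal_apply_ne _ hij] using hA.2 i j hij

theorem exists_mem_SG_submatrix_eq (v : V) {A' : Matrix {x // x ≠ v} {x // x ≠ v} ℝ}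
    (hA' : A' ∈ SG (deleteVert G v)) :
    ∃ A ∈ SG G, A.submatrix Subtype.val Subtype.val = A' := by
  classical
  refine ⟨of fun i j => if h : i ≠ v ∧ j ≠ v then A' ⟨i, h.1⟩ ⟨j, h.2⟩ else G.adjMatrix ℝ i j,
    ⟨?_, fun i j hij => ?_⟩, ?_⟩
  · ext i j
    simp only [transpose_apply, of_apply]
    by_cases h : i ≠ v ∧ j ≠ v
    · rw [dif_pos h, dif_pos h.symm]; exact hA'.1.apply _ _
    · rw [dif_neg h, dif_neg (mt And.symm h)]; exact G.isSymm_adjMatrix.apply _ _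
  · simp only [of_apply]
    by_cases h : i ≠ v ∧ j ≠ v
    · rw [dif_pos h]; exact hA'.2 _ _ (Subtype.coe_ne_coe.mp hij)
    · rw [dif_neg h]; exact (adjMatrix_mem_SG G).2 i j hij
  · ext i j
    simp [i.2, j.2]

end PatternMatrices

section Bordering

variable {V : Type*} [DecidableEq V] {v : V}

/-- Row `v` is `z` and row `j ≠ v` is the unit vector at `j`, so `C * A * Cᵀ` extends `A` by a
vertex `v` whose off-diagonal row is `A *ᵥ z`. -/
def borderingMatrix {R : Type*} [Zero R] [One R] (v : V) (z : {x // x ≠ v} → R) :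
    Matrix V {x // x ≠ v} R :=
  fun j => if h : j = v then z else Pi.single ⟨j, h⟩ 1

@[simp]
theorem borderingMatrix_apply_self {R : Type*} [Zero R] [One R] (z : {x // x ≠ v} → R) :
    borderingMatrix v z v = z := by
  simp [borderingMatrix]

@[simp]
theorem borderingMatrix_apply_val {R : Type*} [Zero R] [One R] (z : {x // x ≠ v} → R)
    (j : {x // x ≠ v}) : borderingMatrix v z j = Pi.single j 1 :=
  dif_neg j.2

variable [Fintype V]

theorem borderingMatrix_mul_mul_transpose_apply_val {R : Type*} [CommSemiring R]
    (z : {x // x ≠ v} → R) (A : Matrix {x // x ≠ v} {x // x ≠ v} R) (j : {x // x ≠ v}) (k : V) :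
    (borderingMatrix v z * A * (borderingMatrix v z)ᵀ) j.val k
      = (A *ᵥ borderingMatrix v z k) j := by
  simp [mul_apply, mulVec, dotProduct, Pi.single_apply]

theorem borderingMatrix_mul_mul_transpose_mem_SG (G : SimpleGraph V)
    (hdom : ∀ w, w ≠ v → G.Adj v w) {A' : Matrix {x // x ≠ v} {x // x ≠ v} ℝ}
    (hA' : A' ∈ SG (deleteVert G v)) {z : {x // x ≠ v} → ℝ} (hz : ∀ i, (A' *ᵥ z) i ≠ 0) :
    borderingMatrix v z * A' * (borderingMatrix v z)ᵀ ∈ SG G := by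
  set C := borderingMatrix v z
  have hsymm : (C * A' * Cᵀ).IsSymm := by
    rw [IsSymm, transpose_mul, transpose_mul, transpose_transpose, hA'.1.eq, Matrix.mul_assoc]
  have hrow : ∀ (j : {x // x ≠ v}) k, k ≠ j.val → ((C * A' * Cᵀ) j.val k ≠ 0 ↔ G.Adj j k) := by
    intro j k hjk
    rw [borderingMatrix_mul_mul_transpose_apply_val]
    by_cases hk : k = v
    · subst hk
      simpa [C, hz j] using (hdom j j.2).symm
    · have hCk : borderingMatrix v z k = Pi.single ⟨k, hk⟩ 1 := borderingMatrix_apply_val z ⟨k, hk⟩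
      simpa [hCk, mulVec_single_one, deleteVert_adj] using
        hA'.2 j ⟨k, hk⟩ fun h => hjk (congrArg Subtype.val h).symm
  refine ⟨hsymm, fun j k hjk => ?_⟩
  by_cases hj : j = v
  · have hk : k ≠ v := hj ▸ hjk.symm
    rw [← hsymm.apply, G.adj_comm]
    exact hrow ⟨k, hk⟩ j hjk
  · exact hrow ⟨j, hj⟩ k hjk.symm

theorem rank_borderingMatrix_mul_mul_transpose_le {K : Type*} [Field K]
    (z : {x // x ≠ v} → K) (A : Matrix {x // x ≠ v} {x // x ≠ v} K) :
    (borderingMatrix v z * A * (borderingMatrix v z)ᵀ).rank ≤ A.rank :=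
  (rank_mul_le_left _ _).trans (rank_mul_le_right _ _)

end Bordering

section Parameters

variable {V : Type*} [Fintype V] (G : SimpleGraph V)

theorem bddAbove_card_sub_rank : BddAbove {k | ∃ A ∈ SG G, Fintype.card V - A.rank = k} :=
  ⟨Fintype.card V, by rintro _ ⟨A, -, rfl⟩; exact Nat.sub_le _ _⟩

theorem le_maxNullity {A : Matrix V V ℝ} (hA : A ∈ SG G) :
    Fintype.card V - A.rank ≤ maxNullity G :=
  le_csSup (bddAbove_card_sub_rank G) ⟨A, hA, rfl⟩

theorem exists_mem_SG_card_sub_rank_eq_maxNullity :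
    ∃ A ∈ SG G, Fintype.card V - A.rank = maxNullity G := by
  classical
  exact Nat.sSup_mem (s := {k | ∃ A ∈ SG G, Fintype.card V - A.rank = k})
    ⟨_, _, adjMatrix_mem_SG G, rfl⟩ (bddAbove_card_sub_rank G)

theorem zfNum_le_card {B : Finset V} (hB : IsZeroForcingSet G B) : zfNum G ≤ B.card :=
  Nat.sInf_le ⟨B, hB, rfl⟩

theorem exists_isZeroForcingSet_card_eq_zfNum :
    ∃ B : Finset V, IsZeroForcingSet G B ∧ B.card = zfNum G :=
  Nat.sInf_mem (s := {k | ∃ B : Finset V, IsZeroForcingSet G B ∧ B.card = k})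
    ⟨_, Finset.univ, fun _ => ZFClosed.init (Finset.mem_coe.mpr (Finset.mem_univ _)), rfl⟩

theorem ZFClosed.eq_zero_of_mulVec_eq_zero {A : Matrix V V ℝ} (hA : A ∈ SG G) {x : V → ℝ}
    (hx : A *ᵥ x = 0) {B : Set V} (hB : ∀ b ∈ B, x b = 0) {w : V} (hw : ZFClosed G B w) :
    x w = 0 := by
  induction hw with
  | init hb => exact hB _ hb
  | @force u t _ hadj _ hu ht =>
    have hrow : (A *ᵥ x) u = A u t * x t := by
      simp only [mulVec, dotProduct]
      refine Finset.sum_eq_single t (fun j _ hjt => ?_) (by simp)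
      by_cases hju : j = u
      · rw [hju, hu, mul_zero]
      by_cases hadj' : G.Adj u j
      · rw [ht j hadj' hjt, mul_zero]
      · rw [not_not.mp (mt (hA.2 u j (Ne.symm hju)).mp hadj'), zero_mul]
    rw [hx, Pi.zero_apply, eq_comm] at hrow
    exact (mul_eq_zero.mp hrow).resolve_left (apply_ne_zero_of_mem_SG_of_adj G hA hadj)

theorem card_sub_rank_le_card_of_isZeroForcingSet {A : Matrix V V ℝ} (hA : A ∈ SG G)
    {B : Finset V} (hB : IsZeroForcingSet G B) : Fintype.card V - A.rank ≤ B.card := by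
  let restrict : (V → ℝ) →ₗ[ℝ] (B → ℝ) := LinearMap.funLeft ℝ ℝ Subtype.val
  have hinj : Function.Injective (restrict.prod A.mulVecLin.rangeRestrict) := by
    rw [← LinearMap.ker_eq_bot, Submodule.eq_bot_iff]
    intro x hx
    have hxB : ∀ b ∈ (B : Set V), x b = 0 := fun b hb => congrFun (congrArg Prod.fst hx) ⟨b, hb⟩
    have hAx : A *ᵥ x = 0 := congrArg Subtype.val (congrArg Prod.snd hx)
    exact funext fun w => ZFClosed.eq_zero_of_mulVec_eq_zero G hA hAx hxB (hB w)
  have hdim := LinearMap.finrank_le_finrank_of_injective hinj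
  simp only [finrank_prod, finrank_fintype_fun_eq_card, Fintype.card_coe] at hdim
  have hrank : A.rank = finrank ℝ (LinearMap.range A.mulVecLin) := rfl
  omega

theorem maxNullity_le_zfNum : maxNullity G ≤ zfNum G := by
  obtain ⟨A, hA, hAM⟩ := exists_mem_SG_card_sub_rank_eq_maxNullity G
  obtain ⟨B, hB, hBZ⟩ := exists_isZeroForcingSet_card_eq_zfNum G
  exact hAM ▸ hBZ ▸ card_sub_rank_le_card_of_isZeroForcingSet G hA hB

end Parameters

section MaxNullityDeleteVert

variable {V : Type*} [Fintype V] (G : SimpleGraph V) {v : V}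

theorem card_sub_rank_add_one_le_maxNullity (hdom : ∀ w, w ≠ v → G.Adj v w)
    {A' : Matrix {x // x ≠ v} {x // x ≠ v} ℝ} (hA' : A' ∈ SG (deleteVert G v))
    (hrows : ∀ i, ∃ j, A' i j ≠ 0) :
    Fintype.card {x // x ≠ v} - A'.rank + 1 ≤ maxNullity G := by
  classical
  obtain ⟨z, hz⟩ := A'.exists_forall_mulVec_ne_zero hrows
  have hnullity := le_maxNullity G (borderingMatrix_mul_mul_transpose_mem_SG G hdom hA' hz)
  have hrank := rank_borderingMatrix_mul_mul_transpose_le z A'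
  have hcard := card_subtype_ne_add_one v
  have hwidth := A'.rank_le_card_width
  omega

theorem maxNullity_deleteVert_add_one_le (hdom : ∀ w, w ≠ v → G.Adj v w)
    (hiso : ∀ i, ∃ j, (deleteVert G v).Adj i j) :
    maxNullity (deleteVert G v) + 1 ≤ maxNullity G := by
  obtain ⟨A', hA', hA'M⟩ := exists_mem_SG_card_sub_rank_eq_maxNullity (deleteVert G v)
  rw [← hA'M]
  refine card_sub_rank_add_one_le_maxNullity G hdom hA' fun i => ?_
  obtain ⟨j, hij⟩ := hiso i
  exact ⟨j, apply_ne_zero_of_mem_SG_of_adj _ hA' hij⟩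

theorem maxNullity_deleteVert_le (hdom : ∀ w, w ≠ v → G.Adj v w) {u : {x // x ≠ v}}
    (hiso : ∀ i, i ≠ u → ∃ j, (deleteVert G v).Adj i j) :
    maxNullity (deleteVert G v) ≤ maxNullity G := by
  classical
  obtain ⟨A', hA', hA'M⟩ := exists_mem_SG_card_sub_rank_eq_maxNullity (deleteVert G v)
  set A'' := A' + diagonal (Pi.single u (1 - A' u u))
  have hA'' : A'' ∈ SG (deleteVert G v) := add_diagonal_mem_SG _ hA' _
  have hrow : ∀ i, i ≠ u → A'' i = A' i := fun i hi => by
    ext j; simp [A'', diagonal_apply, hi]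
  have hrows : ∀ i, ∃ j, A'' i j ≠ 0 := by
    intro i
    by_cases hi : i = u
    · exact ⟨u, by simp [A'', hi]⟩
    · obtain ⟨j, hij⟩ := hiso i hi
      exact ⟨j, hrow i hi ▸ apply_ne_zero_of_mem_SG_of_adj _ hA' hij⟩
  have hnullity := card_sub_rank_add_one_le_maxNullity G hdom hA'' hrows
  have hrank := A''.rank_le_rank_add_one_of_forall_ne_row_eq A' u hrow
  have hwidth := A''.rank_le_card_width
  omega

theorem maxNullity_deleteVert_le_add_one (v : V) :
    maxNullity (deleteVert G v) ≤ maxNullity G + 1 := by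
  obtain ⟨A', hA', hA'M⟩ := exists_mem_SG_card_sub_rank_eq_maxNullity (deleteVert G v)
  obtain ⟨A, hA, rfl⟩ := exists_mem_SG_submatrix_eq G v hA'
  have hnullity := le_maxNullity G hA
  have hrank := A.rank_le_rank_submatrix_ne_ne_add_two v
  have hcard := card_subtype_ne_add_one v
  omega

end MaxNullityDeleteVert

section ZeroForcing

theorem mem_of_isZeroForcingSet_of_forall_not_adj {W : Type*} {H : SimpleGraph W} {B : Set W}
    (hB : IsZeroForcingSet H B) {u : W} (hu : ∀ w, ¬ H.Adj u w) : u ∈ B := by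
  cases hB u with
  | init h => exact h
  | force _ hadj _ => exact absurd hadj.symm (hu _)

theorem ZFClosed.diff_singleton_of_forall_not_adj {W : Type*} {H : SimpleGraph W} {B : Set W}
    {u w : W} (hu : ∀ w, ¬ H.Adj u w) (hw : ZFClosed H B w) (hwu : w ≠ u) :
    ZFClosed H (B \ {u}) w := by
  induction hw with
  | init hb => exact .init ⟨hb, hwu⟩
  | @force x t _ hadj _ ihx iht =>
    refine .force (ihx fun h => hu t (h ▸ hadj)) hadj fun y hy hyt => ?_
    exact iht y hy hyt fun h => hu x (h ▸ hy.symm)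

variable {V : Type*} {G : SimpleGraph V} {v : V}

theorem ZFClosed.of_deleteVert {B : Set {x // x ≠ v}} {w : {x // x ≠ v}}
    (hw : ZFClosed (deleteVert G v) B w) {C : Set V} (hv : ZFClosed G C v)
    (hB : ∀ b ∈ B, ZFClosed G C b.val) : ZFClosed G C w.val := by
  induction hw with
  | init hb => exact hB _ hb
  | @force x t _ hadj _ ihx iht =>
    refine .force ihx hadj fun y hy hyt => ?_
    by_cases hyv : y = v
    · exact hyv ▸ hv
    · exact iht ⟨y, hyv⟩ hy fun h => hyt (congrArg Subtype.val h)

theorem isZeroForcingSet_of_deleteVert_of_forall_not_adj (hdom : ∀ w, w ≠ v → G.Adj v w)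
    {B : Set {x // x ≠ v}} (hB : IsZeroForcingSet (deleteVert G v) B) {u : {x // x ≠ v}}
    (hu : ∀ w, ¬ (deleteVert G v).Adj u w) {C : Set V} (hv : ZFClosed G C v)
    (hBC : ∀ b ∈ B, b ≠ u → b.val ∈ C) : IsZeroForcingSet G C := by
  have hrest : ∀ w : {x // x ≠ v}, w ≠ u → ZFClosed G C w := fun w hwu =>
    (ZFClosed.diff_singleton_of_forall_not_adj hu (hB w) hwu).of_deleteVert hv
      fun b hb => .init (hBC b hb.1 hb.2)
  intro w
  by_cases hwv : w = v
  · exact hwv ▸ hv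
  by_cases hwu : w = u
  · exact hwu ▸ .force hv (hdom u u.2) fun y hy hyu =>
      hrest ⟨y, (G.ne_of_adj hy).symm⟩ fun h => hyu (congrArg Subtype.val h)
  · exact hrest ⟨w, hwv⟩ fun h => hwu (congrArg Subtype.val h)

variable (G) [Fintype V]

theorem zfNum_le_zfNum_deleteVert_add_one (v : V) : zfNum G ≤ zfNum (deleteVert G v) + 1 := by
  classical
  obtain ⟨B, hB, hBZ⟩ := exists_isZeroForcingSet_card_eq_zfNum (deleteVert G v)
  set C := insert v (B.map (Function.Embedding.subtype _))
  have hv : ZFClosed G C v := .init (by simp [C])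
  have hC : IsZeroForcingSet G C := fun w => by
    by_cases hwv : w = v
    · exact hwv ▸ hv
    · exact (hB ⟨w, hwv⟩).of_deleteVert hv fun b hb =>
        .init (by simp [C, Finset.mem_coe.mp hb, b.2])
  calc zfNum G ≤ C.card := zfNum_le_card G hC
    _ ≤ B.card + 1 := (Finset.card_insert_le _ _).trans_eq (by rw [Finset.card_map])
    _ = _ := by rw [hBZ]

theorem zfNum_le_zfNum_deleteVert (hdom : ∀ w, w ≠ v → G.Adj v w) {u : {x // x ≠ v}}
    (hu : ∀ w, ¬ (deleteVert G v).Adj u w) : zfNum G ≤ zfNum (deleteVert G v) := by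
  classical
  obtain ⟨B, hB, hBZ⟩ := exists_isZeroForcingSet_card_eq_zfNum (deleteVert G v)
  set C := insert v ((B.erase u).map (Function.Embedding.subtype _))
  have hC : IsZeroForcingSet G C := isZeroForcingSet_of_deleteVert_of_forall_not_adj hdom hB hu
    (.init (by simp [C])) fun b hb hbu => by simp [C, Finset.mem_coe.mp hb, hbu, Subtype.val_inj]
  calc zfNum G ≤ C.card := zfNum_le_card G hC
    _ ≤ (B.erase u).card + 1 := (Finset.card_insert_le _ _).trans_eq (by rw [Finset.card_map])
    _ = _ := by
      rw [Finset.card_erase_add_one (mem_of_isZeroForcingSet_of_forall_not_adj hB hu), hBZ]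

theorem zfNum_add_one_le_zfNum_deleteVert (hdom : ∀ w, w ≠ v → G.Adj v w)
    {u₁ u₂ : {x // x ≠ v}} (hne : u₁ ≠ u₂) (hu₁ : ∀ w, ¬ (deleteVert G v).Adj u₁ w)
    (hu₂ : ∀ w, ¬ (deleteVert G v).Adj u₂ w) : zfNum G + 1 ≤ zfNum (deleteVert G v) := by
  classical
  obtain ⟨B, hB, hBZ⟩ := exists_isZeroForcingSet_card_eq_zfNum (deleteVert G v)
  set C := (B.erase u₂).map (Function.Embedding.subtype _)
  have hu₁C : u₁.val ∈ C := by
    simp [C, hne, Subtype.val_inj,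
      Finset.mem_coe.mp (mem_of_isZeroForcingSet_of_forall_not_adj hB hu₁)]
  have hv : ZFClosed G C v := .force (.init hu₁C) (hdom u₁ u₁.2).symm fun y hy hyv =>
    absurd (show (deleteVert G v).Adj u₁ ⟨y, hyv⟩ from hy) (hu₁ _)
  have hC : IsZeroForcingSet G C := isZeroForcingSet_of_deleteVert_of_forall_not_adj hdom hB hu₂
    hv fun b hb hbu => by simp [C, Finset.mem_coe.mp hb, hbu, Subtype.val_inj]
  calc zfNum G + 1 ≤ C.card + 1 := by gcongr; exact zfNum_le_card G hC
    _ = _ := by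
      rw [Finset.card_map, Finset.card_erase_add_one
        (mem_of_isZeroForcingSet_of_forall_not_adj hB hu₂), hBZ]

end ZeroForcing

theorem exists_shift_maxNullity_zfNum_deleteVert {V : Type*} [Fintype V] (G : SimpleGraph V)
    {v : V} (hdom : ∀ w, w ≠ v → G.Adj v w) :
    ∃ d : ℤ, (maxNullity (deleteVert G v) : ℤ) + d ≤ maxNullity G ∧
      (zfNum G : ℤ) ≤ zfNum (deleteVert G v) + d := by
  by_cases hiso : ∀ i, ∃ j, (deleteVert G v).Adj i j
  · have hM := maxNullity_deleteVert_add_one_le G hdom hiso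
    have hZ := zfNum_le_zfNum_deleteVert_add_one G v
    exact ⟨1, by omega, by omega⟩
  obtain ⟨u₁, hu₁⟩ : ∃ u₁, ∀ j, ¬ (deleteVert G v).Adj u₁ j := by simpa using hiso
  by_cases hiso₂ : ∃ u₂, u₁ ≠ u₂ ∧ ∀ j, ¬ (deleteVert G v).Adj u₂ j
  · obtain ⟨u₂, hne, hu₂⟩ := hiso₂
    have hM := maxNullity_deleteVert_le_add_one G v
    have hZ := zfNum_add_one_le_zfNum_deleteVert G hdom hne hu₁ hu₂
    exact ⟨-1, by omega, by omega⟩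
  · have hM := maxNullity_deleteVert_le G hdom fun i hi => by
      by_contra! hisoi
      exact hiso₂ ⟨i, Ne.symm hi, hisoi⟩
    have hZ := zfNum_le_zfNum_deleteVert G hdom hu₁
    exact ⟨0, by omega, by omega⟩

theorem maxNullity_eq_zfNum_of_dominating_general {V : Type*} [Fintype V]
    (G : SimpleGraph V) (v : V) (hdom : ∀ w, w ≠ v → G.Adj v w)
    (h : maxNullity (deleteVert G v) = zfNum (deleteVert G v)) :
    maxNullity G = zfNum G := by
  obtain ⟨d, hM, hZ⟩ := exists_shift_maxNullity_zfNum_deleteVert G hdom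
  have hMZ := maxNullity_le_zfNum G
  omega

/-- If `G` has a dominating vertex `v` and `M(G-v) = Z(G-v)`,
then `M(G) = Z(G)`. -/
theorem maxNullity_eq_zfNum_of_dominating {V : Type*} [Fintype V] [DecidableEq V]
    (G : SimpleGraph V) (v : V) (hdom : ∀ w, w ≠ v → G.Adj v w)
    (h : maxNullity (deleteVert G v) = zfNum (deleteVert G v)) :
    maxNullity G = zfNum G :=
  maxNullity_eq_zfNum_of_dominating_general G v hdom h
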